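/- Let R be a Noetherian local ring whose maximal ideal is generated by a regular sequence of length two (so R is a two-dimensional regular local ring). Then for every finitely generated R-module M, the double dual M** = Hom_R(Hom_R(M, R), R) is a finitely generated free R-module. -/

import Mathlib

/-!
Dualizing a presentation `R^m → R^n → M → 0` exhibits `M*` as the kernel of a map
`(R^n)* → (R^m)*` of finite free modules. As `x` is regular on the target and `(x, y)` is
regular on the source, `M*/xM*` embeds into `(R^n)*/x(R^n)*`, so `(x, y)` is regular on `M*`.
Over a Noetherian local ring, a finite module `N` on which a sequence generating the maximal ideal
is regular is free: modding out by its first element `r` gives the same situation over `R/(r)`,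
freeness lifts back from `N/rN` to `N` by Nakayama, and the base case is a vector space over the
residue field. Hence `M*` is finite free, and so is `M**`.
-/

open IsLocalRing RingTheory.Sequence Module

section

variable {R : Type*} [CommRing R]

theorem Function.Exact.dualMap {M N P : Type*} [AddCommGroup M] [Module R M]
    [AddCommGroup N] [Module R N] [AddCommGroup P] [Module R P]
    {f : M →ₗ[R] N} {g : N →ₗ[R] P} (hfg : Function.Exact f g) (hg : Function.Surjective g) :
    Function.Exact g.dualMap f.dualMap :=
  LinearMap.exact_iff.mpr <| by
    rw [LinearMap.ker_dualMap_eq_dualAnnihilator_range, ← hfg.linearMap_ker_eq,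
      LinearMap.range_dualMap_eq_dualAnnihilator_ker_of_surjective g hg]

theorem Module.Finite.dual_of_isNoetherianRing [IsNoetherianRing R] {M : Type*}
    [AddCommGroup M] [Module R M] [Module.Finite R M] : Module.Finite R (Dual R M) := by
  obtain ⟨n, π, hπ⟩ := Module.Finite.exists_fin' R M
  exact Module.Finite.of_injective π.dualMap (LinearMap.dualMap_injective_of_surjective hπ)

namespace RingTheory.Sequence.IsWeaklyRegular

theorem of_flat_module {rs : List R} (h : IsWeaklyRegular R rs)
    (M : Type*) [AddCommGroup M] [Module R M] [Module.Flat R M] : IsWeaklyRegular M rs :=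
  ((TensorProduct.lid R M).isWeaklyRegular_congr rs).mp h.isWeaklyRegular_rTensor

theorem of_exact {K G F : Type*} [AddCommGroup K] [Module R K]
    [AddCommGroup G] [Module R G] [AddCommGroup F] [Module R F] {x y : R}
    {f : K →ₗ[R] G} {g : G →ₗ[R] F} (hf : Function.Injective f) (hfg : Function.Exact f g)
    (hF : IsSMulRegular F x) (hG : IsWeaklyRegular G [x, y]) : IsWeaklyRegular K [x, y] := by
  rw [isWeaklyRegular_cons_iff, isWeaklyRegular_singleton_iff] at hG ⊢
  have hinj := QuotSMulTop.map_first_exact_on_four_term_exact_of_isSMulRegular_last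
    ((LinearMap.exact_zero_iff_injective PUnit f).mpr hf) hfg hF
  rw [map_zero, LinearMap.exact_zero_iff_injective] at hinj
  exact ⟨hG.1.of_injective f hf, hG.2.of_injective _ hinj⟩

end RingTheory.Sequence.IsWeaklyRegular

theorem Module.free_of_isWeaklyRegular_of_maximalIdeal_eq_ofList
    [IsNoetherianRing R] [IsLocalRing R] {rs : List R}
    (hm : maximalIdeal R = Ideal.ofList rs) {M : Type*} [AddCommGroup M] [Module R M]
    [Module.Finite R M] (hM : IsWeaklyRegular M rs) : Module.Free R M := by
  refine IsWeaklyRegular.ndrecWithRing (motive := fun R _ M _ _ rs =>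
    ∀ [IsNoetherianRing R] [IsLocalRing R] [Module.Finite R M],
      maximalIdeal R = Ideal.ofList rs → Module.Free R M) ?_ ?_ hM hm
  · intro R _ M _ _ _ _ _ hm
    let := (isField_iff_maximalIdeal_eq.mpr (hm.trans Ideal.ofList_nil)).toField
    exact Module.Free.of_divisionRing R M
  · intro R _ M _ _ r rs hr _ ih _ _ _ hm
    have hr_mem : r ∈ maximalIdeal R := hm ▸ Ideal.subset_span (List.mem_cons_self ..)
    have : Nontrivial (R ⧸ Ideal.span {r}) := Ideal.Quotient.nontrivial_iff.mpr <|
      ne_top_of_le_ne_top (maximalIdeal.isMaximal R).ne_top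
        ((Ideal.span_singleton_le_iff_mem _).mpr hr_mem)
    have : IsLocalRing (R ⧸ Ideal.span {r}) := .of_surjective' _ Ideal.Quotient.mk_surjective
    have : Module.Finite (R ⧸ Ideal.span {r}) (QuotSMulTop r M) :=
      Module.Finite.of_restrictScalars_finite R _ _
    have : FinitePresentation R M := finitePresentation_of_finite R M
    refine (free_quotSMulTop_iff_free R M ?_ hr).mp (ih ?_)
    · rwa [jacobson_eq_maximalIdeal ⊥ bot_ne_top]
    · rw [← map_maximalIdeal_of_surjective _ Ideal.Quotient.mk_surjective, hm, Ideal.ofList_cons,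
        Ideal.map_sup, Ideal.map_quotient_self, bot_sup_eq, Ideal.map_ofList]

theorem Module.free_dual_of_maximalIdeal_eq_ofList_pair [IsNoetherianRing R] [IsLocalRing R]
    {x y : R} (hm : maximalIdeal R = Ideal.ofList [x, y]) (hreg : IsWeaklyRegular R [x, y])
    (M : Type*) [AddCommGroup M] [Module R M] [Module.Finite R M] :
    Module.Free R (Dual R M) := by
  have : FinitePresentation R M := finitePresentation_of_finite R M
  obtain ⟨n, m, π, ρ, hπ, hρπ⟩ := FinitePresentation.exists_fin' R M
  have : Module.Finite R (Dual R M) := Module.Finite.dual_of_isNoetherianRing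
  have hx : IsSMulRegular (Dual R (Fin m → R)) x :=
    ((isWeaklyRegular_cons_iff (Dual R (Fin m → R)) _ _).mp (hreg.of_flat_module _)).1
  exact free_of_isWeaklyRegular_of_maximalIdeal_eq_ofList hm <|
    .of_exact (LinearMap.dualMap_injective_of_surjective hπ) (hρπ.dualMap hπ) hx
      (hreg.of_flat_module _)

end

theorem double_dual_free_of_regular_dimension_two
    {R : Type*} [CommRing R] [IsNoetherianRing R] [IsLocalRing R]
    (x y : R)
    (hspan : IsLocalRing.maximalIdeal R = Ideal.span {x, y})
    (hx : x ∈ nonZeroDivisors R)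
    (hy : ∀ r : R, y * r ∈ Ideal.span {x} → r ∈ Ideal.span {x})
    (M : Type*) [AddCommGroup M] [Module R M] [Module.Finite R M] :
    Module.Free R (Module.Dual R (Module.Dual R M)) ∧
    Module.Finite R (Module.Dual R (Module.Dual R M)) := by
  have hreg : IsWeaklyRegular R [x, y] := by
    rw [isWeaklyRegular_cons_iff, isWeaklyRegular_singleton_iff,
      isSMulRegular_quotient_iff_mem_of_smul_mem, ← Submodule.ideal_span_singleton_smul,
      smul_eq_mul, Ideal.mul_top]
    exact ⟨Module.Flat.isSMulRegular_of_nonZeroDivisors hx, hy⟩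
  have hm : maximalIdeal R = Ideal.ofList [x, y] := by
    rw [hspan, Ideal.ofList_cons, Ideal.ofList_singleton, ← Ideal.span_insert]
  have := free_dual_of_maximalIdeal_eq_ofList_pair hm hreg M
  have : Module.Finite R (Dual R M) := Module.Finite.dual_of_isNoetherianRing
  exact ⟨inferInstance, inferInstance⟩
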